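/- Let 𝒜 be a unital C*-algebra, let a, b ∈ 𝒜 be positive elements, and let t ∈ (1/2, 1). Then ‖b^(1-t) a^(2t-1) b^(1-t) + a^(1-t) b^(2t-1) a^(1-t)‖ ≤ 2^(max{4t − 3, 0}) · ‖a + b‖. -/

import Mathlib

/-!
Put `M = ‖a + b‖`, so that `a ≤ M - b`. Operator monotonicity of `x ↦ x ^ (2t-1)` gives
`b^(1-t) a^(2t-1) b^(1-t) ≤ g(b)` with `g x = x^(2-2t) (M-x)^(2t-1)`, and symmetrically for
the second term. If `g ≤ α x + β` on `[0, M]` with `α ≥ 0`, the sum is then at most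
`α (a + b) + 2β ≤ α M + 2β`. For `t ≤ 3/4` weighted AM-GM gives `g x ≤ (3-4t) x + (2t-1) M`,
with total `M`; for `t ≥ 3/4` the factorisation `g x = (x (M-x))^(2-2t) (M-x)^(4t-3)` gives
`g x ≤ (M/2)^(4-4t) M^(4t-3) = 2^(4t-4) M`.
-/

open Set

namespace Real

lemma rpow_mul_rpow_mul_rpow_eq {x y u v : ℝ} (hx : 0 ≤ x) (hu : 0 ≤ u) :
    x ^ u * y ^ v * x ^ u = x ^ (2 * u) * y ^ v := by
  rw [two_mul, rpow_add_of_nonneg hx hu hu]; ring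

lemma rpow_mul_rpow_mul_rpow_le_add {x y u v : ℝ} (hx : 0 ≤ x) (hy : 0 ≤ y) (hu : 0 ≤ u)
    (hv : 0 ≤ v) (huv : 2 * u + v = 1) :
    x ^ u * y ^ v * x ^ u ≤ 2 * u * x + v * y := by
  rw [rpow_mul_rpow_mul_rpow_eq hx hu]
  exact geom_mean_le_arith_mean2_weighted (by positivity) hv hx hy huv

lemma two_mul_rpow_mul_rpow_mul_rpow_le {x y u v : ℝ} (hx : 0 ≤ x) (hy : 0 ≤ y) (hu : 0 ≤ u)
    (h2uv : 2 * u ≤ v) (huv : 2 * u + v = 1) :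
    2 * (x ^ u * y ^ v * x ^ u) ≤ 2 ^ (v - 2 * u) * (x + y) := by
  set s := x + y
  have hs : 0 ≤ s := by positivity
  have hxy : x * y ≤ (s / 2) ^ 2 := by nlinarith [sq_nonneg (x - y)]
  have hsplit : x ^ (2 * u) * y ^ v = (x * y) ^ (2 * u) * y ^ (v - 2 * u) := by
    rw [mul_rpow hx hy, mul_assoc, ← rpow_add_of_nonneg hy (by positivity) (by linarith)]
    ring_nf
  have h2 : (2 : ℝ) ^ (v - 2 * u) * 2 ^ (4 * u) = 2 := by
    rw [← rpow_add two_pos, show v - 2 * u + 4 * u = 1 by linarith, rpow_one]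
  have hs1 : s ^ (4 * u) * s ^ (v - 2 * u) = s := by
    rw [← rpow_add_of_nonneg hs (by positivity) (by linarith),
      show 4 * u + (v - 2 * u) = 1 by linarith, rpow_one]
  calc 2 * (x ^ u * y ^ v * x ^ u) = 2 * ((x * y) ^ (2 * u) * y ^ (v - 2 * u)) := by
        rw [rpow_mul_rpow_mul_rpow_eq hx hu, hsplit]
    _ ≤ 2 * (((s / 2) ^ 2) ^ (2 * u) * s ^ (v - 2 * u)) := by gcongr; linarith
    _ = 2 ^ (v - 2 * u) * s := by
      rw [← rpow_natCast, ← rpow_mul (by positivity), div_rpow hs zero_le_two,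
        Nat.cast_ofNat, show (2 : ℝ) * (2 * u) = 4 * u by ring,
        eq_div_of_mul_eq (by positivity) h2]
      conv_rhs => rw [← hs1]
      ring

end Real

namespace CFC

variable {A : Type*} [CStarAlgebra A] [PartialOrder A] [StarOrderedRing A]

lemma rpow_mul_rpow_mul_rpow_le_cfc {c d : A} {M u v : ℝ} (hc : 0 ≤ c) (hd : 0 ≤ d)
    (hcd : c + d ≤ algebraMap ℝ A M) (hu : 0 ≤ u) (hv : v ∈ Icc 0 1) :
    c ^ u * d ^ v * c ^ u ≤ cfc (fun x : ℝ => x ^ u * (M - x) ^ v * x ^ u) c := by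
  have hdM : d ≤ algebraMap ℝ A M - c := by rwa [le_sub_iff_add_le']
  have hMc : algebraMap ℝ A M - c = cfc (fun x : ℝ => M - x) c := by
    rw [cfc_sub .., cfc_const M c, cfc_id' ℝ c]
  calc c ^ u * d ^ v * c ^ u ≤ c ^ u * (algebraMap ℝ A M - c) ^ v * c ^ u :=
        conjugate_le_conjugate_of_nonneg (rpow_le_rpow hv hdM) rpow_nonneg
    _ = cfc (fun x : ℝ => x ^ u * (M - x) ^ v * x ^ u) c := by
      rw [rpow_eq_cfc_real hc, rpow_eq_cfc_real (hd.trans hdM), hMc,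
        ← cfc_comp' (fun x : ℝ => x ^ v) (fun x => M - x) c, ← cfc_mul .., ← cfc_mul ..]

lemma rpow_mul_rpow_mul_rpow_le_smul_add_algebraMap {c d : A} {M u v α β : ℝ} (hc : 0 ≤ c)
    (hd : 0 ≤ d) (hcd : c + d ≤ algebraMap ℝ A M) (hu : 0 ≤ u) (hv : v ∈ Icc 0 1)
    (hg : ∀ x ∈ Icc 0 M, x ^ u * (M - x) ^ v * x ^ u ≤ α * x + β) :
    c ^ u * d ^ v * c ^ u ≤ α • c + algebraMap ℝ A β := by
  have hcM : c ≤ algebraMap ℝ A M := (le_add_of_nonneg_right hd).trans hcd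
  have hspec : ∀ x ∈ spectrum ℝ c, x ∈ Icc 0 M := fun x hx =>
    ⟨spectrum_nonneg_of_nonneg hc hx, (le_algebraMap_iff_spectrum_le (R := ℝ)).mp hcM x hx⟩
  calc c ^ u * d ^ v * c ^ u ≤ cfc (fun x : ℝ => x ^ u * (M - x) ^ v * x ^ u) c :=
        rpow_mul_rpow_mul_rpow_le_cfc hc hd hcd hu hv
    _ ≤ cfc (fun x => α * x + β) c := cfc_mono fun x hx => hg x (hspec x hx)
    _ = α • c + algebraMap ℝ A β := by rw [cfc_add .., cfc_const_mul_id .., cfc_const ..]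

lemma norm_rpow_conj_add_rpow_conj_le {a b : A} (ha : 0 ≤ a) (hb : 0 ≤ b) {u v α β : ℝ}
    (hu : 0 ≤ u) (hv : v ∈ Icc 0 1) (hα : 0 ≤ α)
    (hg : ∀ x ∈ Icc 0 ‖a + b‖, x ^ u * (‖a + b‖ - x) ^ v * x ^ u ≤ α * x + β) :
    ‖b ^ u * a ^ v * b ^ u + a ^ u * b ^ v * a ^ u‖ ≤ α * ‖a + b‖ + 2 * β := by
  set M := ‖a + b‖
  have hM : a + b ≤ algebraMap ℝ A M :=
    IsSelfAdjoint.le_algebraMap_norm_self (.of_nonneg (add_nonneg ha hb))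
  have hβ : 0 ≤ β := by
    have h0 := hg 0 ⟨le_rfl, norm_nonneg _⟩
    rw [sub_zero, mul_zero, zero_add] at h0
    exact le_trans (by positivity) h0
  refine (CStarAlgebra.norm_le_iff_le_algebraMap _ (by positivity)
    (add_nonneg (conjugate_nonneg_of_nonneg rpow_nonneg rpow_nonneg)
      (conjugate_nonneg_of_nonneg rpow_nonneg rpow_nonneg))).mpr ?_
  calc b ^ u * a ^ v * b ^ u + a ^ u * b ^ v * a ^ u
      ≤ (α • b + algebraMap ℝ A β) + (α • a + algebraMap ℝ A β) :=
        add_le_add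
          (rpow_mul_rpow_mul_rpow_le_smul_add_algebraMap hb ha (add_comm a b ▸ hM) hu hv hg)
          (rpow_mul_rpow_mul_rpow_le_smul_add_algebraMap ha hb hM hu hv hg)
    _ = α • (a + b) + algebraMap ℝ A (2 * β) := by rw [smul_add, two_mul, map_add]; abel
    _ ≤ α • algebraMap ℝ A M + algebraMap ℝ A (2 * β) := by gcongr
    _ = algebraMap ℝ A (α * M + 2 * β) := by simp only [map_add, map_mul, Algebra.smul_def]

end CFC

theorem aux_ft_bound_cstar {A : Type*} [CStarAlgebra A]
    [PartialOrder A] [StarOrderedRing A]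
    (a b : A) (ha : 0 ≤ a) (hb : 0 ≤ b) (t : ℝ)
    (ht : t ∈ Set.Ioo (1 / 2 : ℝ) 1) :
    ‖CFC.rpow b (1 - t) * CFC.rpow a (2 * t - 1) * CFC.rpow b (1 - t) +
        CFC.rpow a (1 - t) * CFC.rpow b (2 * t - 1) * CFC.rpow a (1 - t)‖ ≤
      (2 : ℝ) ^ max (4 * t - 3) (0 : ℝ) * ‖a + b‖ := by
  obtain ⟨ht₁, ht₂⟩ := ht
  simp only [CFC.rpow_eq_pow]
  have hu : 0 ≤ 1 - t := by linarith
  have hv : 2 * t - 1 ∈ Icc 0 1 := ⟨by linarith, by linarith⟩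
  have huv : 2 * (1 - t) + (2 * t - 1) = 1 := by ring
  rcases le_total t (3 / 4) with h | h
  · rw [max_eq_right (by linarith), Real.rpow_zero, one_mul]
    refine (CFC.norm_rpow_conj_add_rpow_conj_le ha hb hu hv (by linarith : 0 ≤ 3 - 4 * t)
      (β := (2 * t - 1) * ‖a + b‖) fun x hx => ?_).trans_eq (by ring)
    calc _ ≤ 2 * (1 - t) * x + (2 * t - 1) * (‖a + b‖ - x) :=
          Real.rpow_mul_rpow_mul_rpow_le_add hx.1 (sub_nonneg.mpr hx.2) hu hv.1 huv
      _ = (3 - 4 * t) * x + (2 * t - 1) * ‖a + b‖ := by ring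
  · rw [max_eq_left (by linarith)]
    refine (CFC.norm_rpow_conj_add_rpow_conj_le ha hb hu hv le_rfl
      (β := 2 ^ (4 * t - 3) / 2 * ‖a + b‖) fun x hx => ?_).trans_eq (by ring)
    have := Real.two_mul_rpow_mul_rpow_mul_rpow_le hx.1 (sub_nonneg.mpr hx.2) hu (by linarith) huv
    rw [show 2 * t - 1 - 2 * (1 - t) = 4 * t - 3 by ring, add_sub_cancel] at this
    linarith
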